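/- Let 𝒜 : ℝ^{m×n} → ℝ^p be a linear map with restricted isometry constant R_{2r} < 1, let S_l be the tangent space of the rank-r matrix manifold at a rank-r matrix X_l, let G_l and P_{l−1} be m×n matrices with P_{S_l}(P_{l−1}) ≠ 0, and suppose the restart conditions hold: |⟨P_{S_l}(G_l), P_{S_l}(P_{l−1})⟩| ≤ κ_1 ‖P_{S_l}(G_l)‖_F ‖P_{S_l}(P_{l−1})‖_F and ‖P_{S_l}(G_l)‖_F ≤ κ_2 ‖P_{S_l}(P_{l−1})‖_F, for constants 0 < κ_1 < 1 and κ_2 ≥ 1. Then β_l := −⟨𝒜 P_{S_l}(G_l), 𝒜 P_{S_l}(P_{l−1})⟩ / ‖𝒜 P_{S_l}(P_{l−1})‖_2² satisfies |β_l| ≤ κ_2 R_{2r}/(1 − R_{2r}) + κ_1 κ_2/(1 − R_{2r}). -/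
import Mathlib


open Matrix BigOperators

/-- Frobenius inner product of two real matrices. -/
noncomputable def frobInner {m n : ℕ} (A B : Matrix (Fin m) (Fin n) ℝ) : ℝ :=
  ∑ i, ∑ j, A i j * B i j

/-- Frobenius norm of a real matrix. -/
noncomputable def frobNorm {m n : ℕ} (A : Matrix (Fin m) (Fin n) ℝ) : ℝ :=
  Real.sqrt (∑ i, ∑ j, (A i j) ^ 2)

/-- Euclidean inner product on `ℝ^p`. -/
noncomputable def euclInner {p : ℕ} (x y : Fin p → ℝ) : ℝ := ∑ i, x i * y i

/-- Euclidean norm on `ℝ^p`. -/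
noncomputable def euclNorm {p : ℕ} (x : Fin p → ℝ) : ℝ := Real.sqrt (∑ i, (x i) ^ 2)

/-- `R` is the restricted isometry constant of order `s` of the linear map `A`:
the smallest number `t` such that `(1-t)‖Z‖_F² ≤ ‖A Z‖₂² ≤ (1+t)‖Z‖_F²`
for all matrices `Z` of rank at most `s`. -/
def IsRIC {m n p : ℕ} (A : Matrix (Fin m) (Fin n) ℝ →ₗ[ℝ] (Fin p → ℝ)) (s : ℕ) (R : ℝ) :
    Prop :=
  IsLeast {t : ℝ | ∀ Z : Matrix (Fin m) (Fin n) ℝ, Z.rank ≤ s →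
    (1 - t) * (frobNorm Z) ^ 2 ≤ (euclNorm (A Z)) ^ 2 ∧
      (euclNorm (A Z)) ^ 2 ≤ (1 + t) * (frobNorm Z) ^ 2} R

/-- Orthogonal projection onto the tangent space of the rank-`r` manifold at
`U * Σ * Vᵀ`: `P(Z) = U Uᵀ Z + Z V Vᵀ − U Uᵀ Z V Vᵀ`. -/
noncomputable def tangentProj {m n r : ℕ} (U : Matrix (Fin m) (Fin r) ℝ)
    (V : Matrix (Fin n) (Fin r) ℝ) (Z : Matrix (Fin m) (Fin n) ℝ) :
    Matrix (Fin m) (Fin n) ℝ :=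
  U * Uᵀ * Z + Z * (V * Vᵀ) - U * Uᵀ * Z * (V * Vᵀ)

/-- Spectral (operator) norm of a real matrix. -/
noncomputable def specNorm {m n : ℕ} (A : Matrix (Fin m) (Fin n) ℝ) : ℝ :=
  sSup {c : ℝ | ∃ x : Fin n → ℝ, euclNorm x ≤ 1 ∧ c = euclNorm (A.mulVec x)}

section Aux

/-- squared Euclidean norm as a sum -/
noncomputable def En {p : ℕ} (x : Fin p → ℝ) : ℝ := ∑ i, (x i) ^ 2

/-- squared Frobenius norm as a sum -/
noncomputable def Fn {m n : ℕ} (Z : Matrix (Fin m) (Fin n) ℝ) : ℝ := ∑ i, ∑ j, (Z i j) ^ 2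

lemma En_nonneg {p : ℕ} (x : Fin p → ℝ) : 0 ≤ En x :=
  Finset.sum_nonneg fun _ _ => sq_nonneg _

lemma Fn_nonneg {m n : ℕ} (Z : Matrix (Fin m) (Fin n) ℝ) : 0 ≤ Fn Z :=
  Finset.sum_nonneg fun _ _ => Finset.sum_nonneg fun _ _ => sq_nonneg _

lemma euclNorm_sq {p : ℕ} (x : Fin p → ℝ) : (euclNorm x) ^ 2 = En x :=
  Real.sq_sqrt (En_nonneg x)

lemma frobNorm_sq {m n : ℕ} (Z : Matrix (Fin m) (Fin n) ℝ) : (frobNorm Z) ^ 2 = Fn Z :=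
  Real.sq_sqrt (Fn_nonneg Z)

lemma frobNorm_nonneg {m n : ℕ} (Z : Matrix (Fin m) (Fin n) ℝ) : 0 ≤ frobNorm Z :=
  Real.sqrt_nonneg _

lemma Fn_eq_zero {m n : ℕ} {Z : Matrix (Fin m) (Fin n) ℝ} (h : Fn Z = 0) : Z = 0 := by
  ext i j
  have h1 : ∀ i ∈ Finset.univ, (0:ℝ) ≤ ∑ j, (Z i j)^2 :=
    fun _ _ => Finset.sum_nonneg fun _ _ => sq_nonneg _
  have h2 := (Finset.sum_eq_zero_iff_of_nonneg h1).mp h i (Finset.mem_univ i)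
  have h3 := (Finset.sum_eq_zero_iff_of_nonneg (fun _ _ => sq_nonneg (Z i _))).mp h2 j
    (Finset.mem_univ j)
  have := pow_eq_zero_iff (n := 2) (by norm_num) |>.mp h3
  simpa using this

lemma En_add {p : ℕ} (x y : Fin p → ℝ) :
    En (x + y) = En x + 2 * euclInner x y + En y := by
  simp only [En, euclInner, Pi.add_apply, Finset.mul_sum, ← Finset.sum_add_distrib]
  apply Finset.sum_congr rfl; intro i _; ring

lemma En_sub {p : ℕ} (x y : Fin p → ℝ) :
    En (x - y) = En x - 2 * euclInner x y + En y := by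
  simp only [En, euclInner, Pi.sub_apply, Finset.mul_sum]
  rw [← Finset.sum_sub_distrib, ← Finset.sum_add_distrib]
  exact Finset.sum_congr rfl fun i _ => by ring

lemma Fn_add {m n : ℕ} (X Y : Matrix (Fin m) (Fin n) ℝ) :
    Fn (X + Y) = Fn X + 2 * frobInner X Y + Fn Y := by
  simp only [Fn, frobInner, Matrix.add_apply, Finset.mul_sum]
  rw [← Finset.sum_add_distrib, ← Finset.sum_add_distrib]
  refine Finset.sum_congr rfl fun i _ => ?_
  rw [← Finset.sum_add_distrib, ← Finset.sum_add_distrib]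
  exact Finset.sum_congr rfl fun j _ => by ring

lemma Fn_sub {m n : ℕ} (X Y : Matrix (Fin m) (Fin n) ℝ) :
    Fn (X - Y) = Fn X - 2 * frobInner X Y + Fn Y := by
  simp only [Fn, frobInner, Matrix.sub_apply, Finset.mul_sum]
  rw [← Finset.sum_sub_distrib, ← Finset.sum_add_distrib]
  refine Finset.sum_congr rfl fun i _ => ?_
  rw [← Finset.sum_sub_distrib, ← Finset.sum_add_distrib]
  exact Finset.sum_congr rfl fun j _ => by ring

lemma Fn_smul {m n : ℕ} (c : ℝ) (Z : Matrix (Fin m) (Fin n) ℝ) :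
    Fn (c • Z) = c ^ 2 * Fn Z := by
  simp only [Fn, Matrix.smul_apply, smul_eq_mul, mul_pow, Finset.mul_sum]

lemma euclInner_smul {p : ℕ} (c d : ℝ) (x y : Fin p → ℝ) :
    euclInner (c • x) (d • y) = c * d * euclInner x y := by
  simp only [euclInner, Pi.smul_apply, smul_eq_mul, Finset.mul_sum]
  apply Finset.sum_congr rfl; intro i _; ring

lemma frobInner_smul {m n : ℕ} (c d : ℝ) (X Y : Matrix (Fin m) (Fin n) ℝ) :
    frobInner (c • X) (d • Y) = c * d * frobInner X Y := by
  simp only [frobInner, Matrix.smul_apply, smul_eq_mul, Finset.mul_sum]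
  apply Finset.sum_congr rfl; intro i _
  apply Finset.sum_congr rfl; intro j _; ring

lemma tangentProj_smul {m n r : ℕ} (U : Matrix (Fin m) (Fin r) ℝ)
    (V : Matrix (Fin n) (Fin r) ℝ) (c : ℝ) (Z : Matrix (Fin m) (Fin n) ℝ) :
    tangentProj U V (c • Z) = c • tangentProj U V Z := by
  simp only [tangentProj, Matrix.mul_smul, Matrix.smul_mul, smul_sub, smul_add]

lemma tangentProj_add {m n r : ℕ} (U : Matrix (Fin m) (Fin r) ℝ)
    (V : Matrix (Fin n) (Fin r) ℝ) (Z W : Matrix (Fin m) (Fin n) ℝ) :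
    tangentProj U V (Z + W) = tangentProj U V Z + tangentProj U V W := by
  simp only [tangentProj, Matrix.mul_add, Matrix.add_mul]
  abel

lemma tangentProj_sub {m n r : ℕ} (U : Matrix (Fin m) (Fin r) ℝ)
    (V : Matrix (Fin n) (Fin r) ℝ) (Z W : Matrix (Fin m) (Fin n) ℝ) :
    tangentProj U V (Z - W) = tangentProj U V Z - tangentProj U V W := by
  simp only [tangentProj, Matrix.mul_sub, Matrix.sub_mul]
  abel

lemma my_rank_add_le {m n : ℕ} (A B : Matrix (Fin m) (Fin n) ℝ) :
    (A + B).rank ≤ A.rank + B.rank := by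
  rw [Matrix.rank, Matrix.rank, Matrix.rank, Matrix.mulVecLin_add]
  have h : LinearMap.range (A.mulVecLin + B.mulVecLin) ≤
      LinearMap.range A.mulVecLin ⊔ LinearMap.range B.mulVecLin := by
    rintro x ⟨y, rfl⟩
    exact Submodule.mem_sup.mpr ⟨A.mulVecLin y, ⟨y, rfl⟩, B.mulVecLin y, ⟨y, rfl⟩, rfl⟩
  exact le_trans (Submodule.finrank_mono h)
    (Submodule.finrank_add_le_finrank_add_finrank _ _)

lemma rank_tangentProj {m n r : ℕ} (U : Matrix (Fin m) (Fin r) ℝ)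
    (V : Matrix (Fin n) (Fin r) ℝ) (Z : Matrix (Fin m) (Fin n) ℝ) :
    (tangentProj U V Z).rank ≤ 2 * r := by
  have hrw : tangentProj U V Z = U * (Uᵀ * Z) + (Z - U * Uᵀ * Z) * (V * Vᵀ) := by
    simp only [tangentProj, Matrix.sub_mul, Matrix.mul_assoc]
    abel
  rw [hrw]
  calc (U * (Uᵀ * Z) + (Z - U * Uᵀ * Z) * (V * Vᵀ)).rank
      ≤ (U * (Uᵀ * Z)).rank + ((Z - U * Uᵀ * Z) * (V * Vᵀ)).rank := my_rank_add_le _ _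
    _ ≤ r + r := by
        gcongr
        · exact le_trans (Matrix.rank_mul_le_left _ _)
            (le_trans (Matrix.rank_le_width U) (by simp))
        · exact le_trans (Matrix.rank_mul_le_right _ _)
            (le_trans (Matrix.rank_mul_le_left _ _)
              (le_trans (Matrix.rank_le_width V) (by simp)))
    _ = 2 * r := by ring

/-- polarization bound -/
lemma ip_diff_bound {m n p : ℕ} (A : Matrix (Fin m) (Fin n) ℝ →ₗ[ℝ] (Fin p → ℝ))
    (R : ℝ) (s : ℕ)
    (hR : ∀ Z : Matrix (Fin m) (Fin n) ℝ, Z.rank ≤ s →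
      (1 - R) * Fn Z ≤ En (A Z) ∧ En (A Z) ≤ (1 + R) * Fn Z)
    (X Y : Matrix (Fin m) (Fin n) ℝ)
    (h1 : (X + Y).rank ≤ s) (h2 : (X - Y).rank ≤ s) :
    |euclInner (A X) (A Y) - frobInner X Y| ≤ R / 2 * (Fn X + Fn Y) := by
  obtain ⟨e1, e2⟩ := hR (X + Y) h1
  obtain ⟨e3, e4⟩ := hR (X - Y) h2
  have hAadd : A (X + Y) = A X + A Y := map_add A X Y
  have hAsub : A (X - Y) = A X - A Y := map_sub A X Y
  rw [hAadd, En_add] at e1 e2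
  rw [hAsub, En_sub] at e3 e4
  rw [Fn_add] at e1 e2
  rw [Fn_sub] at e3 e4
  rw [abs_le]
  constructor <;> nlinarith [Fn_nonneg X, Fn_nonneg Y, Fn_nonneg (X + Y), Fn_nonneg (X - Y)]

end Aux

set_option maxHeartbeats 1000000 in
/-- Lemma 6, bound on `β_l`: under the restart conditions,
`|β_l| ≤ κ₂R₂ᵣ/(1 − R₂ᵣ) + κ₁κ₂/(1 − R₂ᵣ)`. -/
theorem beta_bound {m n p r : ℕ}
    (A : Matrix (Fin m) (Fin n) ℝ →ₗ[ℝ] (Fin p → ℝ))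
    (R2 : ℝ) (hR2 : IsRIC A (2 * r) R2) (hR2lt : R2 < 1)
    (Xl : Matrix (Fin m) (Fin n) ℝ) (hrankXl : Xl.rank = r)
    -- reduced SVD of `X_l`, defining the tangent space `S_l`
    (Ul : Matrix (Fin m) (Fin r) ℝ) (Vl : Matrix (Fin n) (Fin r) ℝ)
    (Sl : Matrix (Fin r) (Fin r) ℝ)
    (hUl : Ulᵀ * Ul = 1) (hVl : Vlᵀ * Vl = 1)
    (hSl : Sl.IsDiag ∧ ∀ i, 0 < Sl i i) (hXlsvd : Xl = Ul * Sl * Vlᵀ)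
    (G P : Matrix (Fin m) (Fin n) ℝ)
    (hPne : tangentProj Ul Vl P ≠ 0)
    (κ1 κ2 : ℝ) (hκ1 : 0 < κ1 ∧ κ1 < 1) (hκ2 : 1 ≤ κ2)
    -- restart conditions
    (hcond1 : |frobInner (tangentProj Ul Vl G) (tangentProj Ul Vl P)| ≤
      κ1 * frobNorm (tangentProj Ul Vl G) * frobNorm (tangentProj Ul Vl P))
    (hcond2 : frobNorm (tangentProj Ul Vl G) ≤ κ2 * frobNorm (tangentProj Ul Vl P))
    (β : ℝ)
    (hβ : β = -(euclInner (A (tangentProj Ul Vl G)) (A (tangentProj Ul Vl P))) /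
      (euclNorm (A (tangentProj Ul Vl P))) ^ 2) :
    |β| ≤ κ2 * R2 / (1 - R2) + κ1 * κ2 / (1 - R2) := by
  set g := tangentProj Ul Vl G with hg
  set q := tangentProj Ul Vl P with hq
  -- RIC in terms of Fn/En
  have hRIC : ∀ Z : Matrix (Fin m) (Fin n) ℝ, Z.rank ≤ 2 * r →
      (1 - R2) * Fn Z ≤ En (A Z) ∧ En (A Z) ≤ (1 + R2) * Fn Z := by
    intro Z hZ
    have := hR2.1 Z hZ
    rwa [frobNorm_sq, euclNorm_sq] at this
  have h1R : (0:ℝ) < 1 - R2 := by linarith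
  set a := frobNorm g with ha
  set b := frobNorm q with hb
  have ha0 : 0 ≤ a := frobNorm_nonneg g
  have hb0 : 0 ≤ b := frobNorm_nonneg q
  -- b > 0
  have hFnq : 0 < Fn q := by
    rcases lt_or_eq_of_le (Fn_nonneg q) with h | h
    · exact h
    · exact absurd (Fn_eq_zero h.symm) hPne
  have hbpos : 0 < b := by
    rw [hb, frobNorm]
    exact Real.sqrt_pos.mpr hFnq
  have hb2 : b ^ 2 = Fn q := frobNorm_sq q
  have ha2 : a ^ 2 = Fn g := frobNorm_sq g
  -- R2 ≥ 0
  have hR2nn : 0 ≤ R2 := by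
    obtain ⟨l, u⟩ := hRIC q (rank_tangentProj Ul Vl P)
    nlinarith
  -- key polarization bound, applied to X = b•g, Y = a•q
  have hXY : (b • g) + (a • q) = tangentProj Ul Vl (b • G + a • P) := by
    rw [tangentProj_add, tangentProj_smul, tangentProj_smul]
  have hXY' : (b • g) - (a • q) = tangentProj Ul Vl (b • G - a • P) := by
    rw [tangentProj_sub, tangentProj_smul, tangentProj_smul]
  have key := ip_diff_bound A R2 (2 * r) hRIC (b • g) (a • q)
    (by rw [hXY]; exact rank_tangentProj _ _ _)
    (by rw [hXY']; exact rank_tangentProj _ _ _)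
  rw [_root_.map_smul, _root_.map_smul, euclInner_smul, frobInner_smul, Fn_smul, Fn_smul] at key
  set num := euclInner (A g) (A q) with hnum
  set fI := frobInner g q with hfI
  have hd : |num - fI| ≤ R2 * a * b := by
    rcases eq_or_lt_of_le ha0 with h | h
    · have hg0 : g = 0 := Fn_eq_zero (by rw [← ha2, ← h]; ring)
      have h1 : num = 0 := by
        rw [hnum, hg0, map_zero]
        simp [euclInner]
      have h2 : fI = 0 := by
        rw [hfI, hg0]
        simp [frobInner]
      rw [h1, h2, ← h]
      simp
    · rw [← mul_sub, abs_mul, abs_of_nonneg (by positivity : (0:ℝ) ≤ b * a),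
        ← ha2, ← hb2] at key
      nlinarith [key, mul_pos hbpos h, abs_nonneg (num - fI)]
  have hnumb : |num| ≤ (R2 + κ1) * κ2 * b ^ 2 := by
    have h5 : |num| ≤ |num - fI| + |fI| := by
      calc |num| = |(num - fI) + fI| := by ring_nf
        _ ≤ |num - fI| + |fI| := abs_add_le _ _
    have h6 : |num| ≤ R2 * a * b + κ1 * a * b := by linarith
    have e7 : a * b ≤ κ2 * b ^ 2 := by nlinarith [mul_le_mul_of_nonneg_right hcond2 hb0]
    have e8 := mul_le_mul_of_nonneg_left e7 hR2nn
    have e9 := mul_le_mul_of_nonneg_left e7 hκ1.1.le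
    nlinarith [h6, e8, e9]
  have hD : (1 - R2) * b ^ 2 ≤ (euclNorm (A q)) ^ 2 := by
    have h := (hRIC q (rank_tangentProj Ul Vl P)).1
    rw [euclNorm_sq, hb2]
    exact h
  have hDpos : 0 < (euclNorm (A q)) ^ 2 := lt_of_lt_of_le (by positivity) hD
  rw [hβ, abs_div, abs_neg, abs_of_pos hDpos]
  have step : |num| / (euclNorm (A q)) ^ 2 ≤ ((R2 + κ1) * κ2 * b ^ 2) / ((1 - R2) * b ^ 2) :=
    div_le_div₀ (mul_nonneg (mul_nonneg (by linarith [hR2nn, hκ1.1.le]) (by linarith))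
      (sq_nonneg b)) hnumb (by positivity) hD
  have heq : ((R2 + κ1) * κ2 * b ^ 2) / ((1 - R2) * b ^ 2) =
      κ2 * R2 / (1 - R2) + κ1 * κ2 / (1 - R2) := by
    field_simp
  rw [heq] at step
  exact step
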